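/- arXiv:1306.5888 — 3 statements merged into one kernel-verified Lean document; each statement's English description precedes it below -/
import Mathlib

section
/- For nonnegative integers m, h with 0 ≤ m < h, the higher order Bernoulli polynomials satisfy Σ_{k=0}^{h-1} C(h,k) (-1)^{h-1-k} B_m^{(k)}(kx/h) = B_m^{(h)}(x). -/
open Finset PowerSeries

/-- The formal power series `(e^t - 1)/t`. -/
noncomputable def expD : PowerSeries ℂ :=
  PowerSeries.mk fun n => PowerSeries.coeff (n + 1) (PowerSeries.exp ℂ - 1)

/-- The higher order Bernoulli polynomial `B_m^{(w)}(x)`, defined by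
`(t/(e^t-1))^w e^{xt} = ∑_{m≥0} B_m^{(w)}(x) t^m/m!`. -/
noncomputable def hBernoulli (w : ℕ) (x : ℂ) (m : ℕ) : ℂ :=
  (Nat.factorial m : ℂ) *
    PowerSeries.coeff m (PowerSeries.rescale x (PowerSeries.exp ℂ) * expD⁻¹ ^ w)

/-!
Put `G = e^{xt/h} · t/(e^t - 1)`. Since `e^{kxt/h} = (e^{xt/h})^k`, the `k`-th summand is
`C(h,k) (-1)^{h-1-k} m! [t^m] G^k`, so by the binomial theorem the sum is
`m! [t^m] (G^h - (G - 1)^h)`. As `G ≡ 1 mod t`, the power `(G - 1)^h` is divisible by `t^h`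
and does not contribute to the coefficient of `t^m` for `m < h`; what remains is `B_m^{(h)}(x)`.
-/

theorem sum_range_choose_mul_neg_one_pow_smul_pow {R A : Type*} [CommRing R] [CommRing A]
    [Algebra R A] (a : A) (n : ℕ) :
    ∑ k ∈ range n, ((n.choose k : R) * (-1) ^ (n - 1 - k)) • a ^ k = a ^ n - (a - 1) ^ n := by
  have hterm : ∀ k ∈ range n, ((n.choose k : R) * (-1) ^ (n - 1 - k)) • a ^ k
      = -(a ^ k * (-1) ^ (n - k) * n.choose k) := by
    intro k hk
    rw [show n - k = n - 1 - k + 1 by grind, pow_succ, Algebra.smul_def]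
    simp only [map_mul, map_pow, map_neg, map_one, map_natCast]
    ring
  rw [sum_congr rfl hterm, sub_eq_add_neg a, add_pow, sum_range_succ, sum_neg_distrib]
  simp

theorem PowerSeries.coeff_pow_eq_zero_of_constantCoeff_eq_zero {R : Type*} [Semiring R]
    {φ : R⟦X⟧} (hφ : constantCoeff φ = 0) {m n : ℕ} (hmn : m < n) : coeff m (φ ^ n) = 0 :=
  coeff_of_lt_order m <|
    (Nat.cast_lt.mpr hmn).trans_le <| le_order_pow_of_constantCoeff_eq_zero n hφ

theorem PowerSeries.rescale_natCast_mul_exp {A : Type*} [CommRing A] [Algebra ℚ A] (k : ℕ)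
    (c : A) : rescale (k * c) (exp A) = rescale c (exp A) ^ k := by
  rw [rescale_mul, RingHom.comp_apply, ← exp_pow_eq_rescale_exp, map_pow]

theorem constantCoeff_expD : constantCoeff expD = 1 := by
  simp [expD, coeff_exp]

theorem hBernoulli_natCast_mul (k : ℕ) (c : ℂ) (m : ℕ) :
    hBernoulli k (k * c) m =
      (m.factorial : ℂ) * coeff m ((rescale c (exp ℂ) * expD⁻¹) ^ k) := by
  rw [hBernoulli, rescale_natCast_mul_exp, mul_pow]

theorem hBernoulli_alternating_sum (m h : ℕ) (hmh : m < h) (x : ℂ) :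
    ∑ k ∈ Finset.range h,
        (h.choose k : ℂ) * (-1) ^ (h - 1 - k) * hBernoulli k ((k : ℂ) * x / h) m
      = hBernoulli h x m := by
  have hh : (h : ℂ) ≠ 0 := Nat.cast_ne_zero.mpr (by omega)
  set G := rescale (x / h) (exp ℂ) * expD⁻¹
  have hG : constantCoeff (G - 1) = 0 := by
    rw [map_sub, map_mul, constantCoeff_inv, constantCoeff_expD, ← coeff_zero_eq_constantCoeff,
      coeff_rescale]
    simp
  calc ∑ k ∈ range h, (h.choose k : ℂ) * (-1) ^ (h - 1 - k) * hBernoulli k (k * x / h) m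
      = (m.factorial : ℂ) *
          coeff m (∑ k ∈ range h, ((h.choose k : ℂ) * (-1) ^ (h - 1 - k)) • G ^ k) := by
        rw [map_sum, mul_sum]
        refine sum_congr rfl fun k _ => ?_
        rw [mul_div_assoc, hBernoulli_natCast_mul, coeff_smul, smul_eq_mul]
        ring
    _ = (m.factorial : ℂ) * coeff m (G ^ h - (G - 1) ^ h) := by
        rw [sum_range_choose_mul_neg_one_pow_smul_pow]
    _ = hBernoulli h x m := by
        rw [map_sub, coeff_pow_eq_zero_of_constantCoeff_eq_zero hG hmh, sub_zero,
          ← hBernoulli_natCast_mul, mul_div_cancel₀ x hh]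
end

section
/- For nonnegative integers i ≥ j, the Bernoulli polynomials satisfy C(i,j) B_{i-j}(x) = Σ_{k=j}^{i} (i/k) R₂(i-1, k-1, x) s(k, j), where R₂(m,k,x) denotes Carlitz's weighted Stirling numbers of the second kind and s(k,j) the signed Stirling numbers of the first kind. -/
open Finset PowerSeries

/-- Carlitz's weighted Stirling numbers of the second kind `R₂(m,k,x)`, defined by
`(1/k!) e^{xt}(e^t-1)^k = ∑_{m≥0} R₂(m,k,x) t^m/m!`. -/
noncomputable def R2 (m k : ℕ) (x : ℂ) : ℂ :=
  (Nat.factorial m : ℂ) / (Nat.factorial k : ℂ) *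
    PowerSeries.coeff (R := ℂ) m
      (PowerSeries.rescale x (PowerSeries.exp ℂ) * (PowerSeries.exp ℂ - 1) ^ k)

/-- The signed Stirling numbers of the first kind, defined by
`x(x-1)⋯(x-n+1) = ∑_k s(n,k) x^k`. -/
def s1 : ℕ → ℕ → ℤ
  | 0, 0 => 1
  | 0, _ + 1 => 0
  | n + 1, 0 => -(n : ℤ) * s1 n 0
  | n + 1, k + 1 => s1 n k - (n : ℤ) * s1 n (k + 1)

/-!
The generating function of `R₂(i-1, k-1, x)` shows that the right-hand side is `i!` times the
coefficient of `t^(i-1)` in `e^{xt} ∑_k s(k,j) (e^t-1)^(k-1) / k!`. Orthogonality of the two kinds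
of Stirling numbers (from `x^m = ∑_k S(m,k) x(x-1)⋯(x-k+1)`) gives
`∑_{k ≤ i} s(k,j) (e^t-1)^k / k! ≡ t^j / j!` modulo `t^(i+1)`. Multiplying by `t` rather than
dividing by `e^t - 1`, the Bernoulli generating function `(e^t-1) ∑ B_n(x) t^n/n! = t e^{xt}` turns
the coefficient into `B_{i-j}(x) / (j! (i-j)!)`.
-/

open scoped Nat

theorem s1_eq_zero_of_lt : ∀ {n k : ℕ}, n < k → s1 n k = 0
  | 0, _ + 1, _ => rfl
  | n + 1, k + 1, h => by
    rw [s1, s1_eq_zero_of_lt (by omega), s1_eq_zero_of_lt (by omega), mul_zero, sub_zero]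

theorem coeff_descPochhammer_int (n k : ℕ) : (descPochhammer ℤ n).coeff k = s1 n k := by
  induction n generalizing k with
  | zero => cases k <;> simp [s1, Polynomial.coeff_one]
  | succ n ih =>
    rw [descPochhammer_succ_right, ← map_natCast Polynomial.C]
    cases k with
    | zero => simp [s1, ih, mul_comm]
    | succ k => rw [Polynomial.coeff_mul_X_sub_C, ih, ih, s1, mul_comm]

theorem X_mul_descPochhammer (R : Type*) [CommRing R] (k : ℕ) :
    Polynomial.X * descPochhammer R k =
      descPochhammer R (k + 1) + (k : Polynomial R) * descPochhammer R k := by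
  rw [descPochhammer_succ_right]; ring

theorem X_pow_eq_sum_stirlingSecond_mul_descPochhammer (R : Type*) [CommRing R] (m : ℕ) :
    (Polynomial.X : Polynomial R) ^ m =
      ∑ k ∈ range (m + 1), (m.stirlingSecond k : Polynomial R) * descPochhammer R k := by
  induction m with
  | zero => simp
  | succ m ih =>
    have hshift : ∑ k ∈ range (m + 1),
          ((k + 1 : ℕ) * m.stirlingSecond (k + 1) : Polynomial R) * descPochhammer R (k + 1) =
        ∑ k ∈ range (m + 1), (k * m.stirlingSecond k : Polynomial R) * descPochhammer R k := by
      rw [sum_range_succ, sum_range_succ' _ m, Nat.stirlingSecond_eq_zero_of_lt (by omega)]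
      simp
    calc Polynomial.X ^ (m + 1)
        = ∑ k ∈ range (m + 1), (m.stirlingSecond k : Polynomial R) *
            (descPochhammer R (k + 1) + (k : Polynomial R) * descPochhammer R k) := by
          simp only [pow_succ', ih, mul_sum, mul_left_comm Polynomial.X, X_mul_descPochhammer]
      _ = ∑ k ∈ range (m + 1), (m.stirlingSecond k : Polynomial R) * descPochhammer R (k + 1) +
            ∑ k ∈ range (m + 1), ((k + 1 : ℕ) * m.stirlingSecond (k + 1) : Polynomial R) *
              descPochhammer R (k + 1) := by
          rw [hshift, ← sum_add_distrib]
          exact sum_congr rfl fun k _ => by ring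
      _ = _ := by
          rw [sum_range_succ' _ (m + 1), ← sum_add_distrib]
          simp only [Nat.stirlingSecond_succ_succ, Nat.stirlingSecond_succ_zero, Nat.cast_zero,
            zero_mul, add_zero]
          exact sum_congr rfl fun k _ => by push_cast; ring

theorem sum_s1_mul_stirlingSecond (m j : ℕ) :
    ∑ k ∈ range (m + 1), s1 k j * m.stirlingSecond k = if j = m then 1 else 0 := by
  have h := congrArg (Polynomial.coeff · j) (X_pow_eq_sum_stirlingSecond_mul_descPochhammer ℤ m)
  simp only [Polynomial.coeff_X_pow, Polynomial.finsetSum_coeff, ← Polynomial.C_eq_natCast,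
    Polynomial.coeff_C_mul, coeff_descPochhammer_int] at h
  rw [h]
  exact sum_congr rfl fun k _ => mul_comm _ _

theorem derivative_exp_sub_one_pow (A : Type*) [CommRing A] [Algebra ℚ A] (k : ℕ) :
    d⁄dX A ((exp A - 1) ^ (k + 1)) =
      (k + 1) • ((exp A - 1) ^ (k + 1) + (exp A - 1) ^ k) := by
  rw [Derivation.leibniz_pow, map_sub, derivative_exp, Derivation.map_one_eq_zero, sub_zero,
    Nat.add_sub_cancel, smul_eq_mul, pow_succ, ← mul_add_one, sub_add_cancel]

theorem factorial_mul_coeff_exp_sub_one_pow (A : Type*) [CommRing A] [Algebra ℚ A] (m k : ℕ) :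
    (m ! : A) * coeff m ((exp A - 1) ^ k) = (k ! * m.stirlingSecond k : ℕ) := by
  induction m generalizing k with
  | zero => cases k <;> simp
  | succ m ih =>
    cases k with
    | zero => simp [coeff_one]
    | succ k =>
      have h : coeff (m + 1) ((exp A - 1) ^ (k + 1)) * ((m : A) + 1) =
          (k + 1 : ℕ) • (coeff m ((exp A - 1) ^ (k + 1)) + coeff m ((exp A - 1) ^ k)) := by
        rw [← coeff_derivative, derivative_exp_sub_one_pow, map_nsmul, map_add]
      calc ((m + 1)! : A) * coeff (m + 1) ((exp A - 1) ^ (k + 1))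
          = (k + 1 : ℕ) • ((m ! : A) * coeff m ((exp A - 1) ^ (k + 1)) +
              (m ! : A) * coeff m ((exp A - 1) ^ k)) := by
            rw [← mul_add, ← mul_smul_comm, ← h, Nat.factorial_succ]
            push_cast
            ring
        _ = _ := by
            rw [ih, ih, Nat.factorial_succ, Nat.stirlingSecond_succ_succ]
            push_cast
            ring

theorem sum_Icc_s1_mul_stirlingSecond {m n : ℕ} (hmn : m ≤ n) (j : ℕ) :
    ∑ k ∈ Icc j n, s1 k j * m.stirlingSecond k = if j = m then 1 else 0 := by
  have hIcc : ∑ k ∈ Icc j n, s1 k j * m.stirlingSecond k =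
      ∑ k ∈ range (n + 1), s1 k j * m.stirlingSecond k := by
    refine sum_subset (fun k hk => by simp only [mem_Icc, mem_range] at hk ⊢; omega)
      fun k hkn hk => ?_
    rw [s1_eq_zero_of_lt (by simp only [mem_Icc, mem_range] at hkn hk; omega), zero_mul]
  have hrange : ∑ k ∈ range (m + 1), s1 k j * m.stirlingSecond k =
      ∑ k ∈ range (n + 1), s1 k j * m.stirlingSecond k := by
    refine sum_subset (fun k hk => by simp only [mem_range] at hk ⊢; omega) fun k _ hk => ?_
    rw [Nat.stirlingSecond_eq_zero_of_lt (by simpa using hk), Nat.cast_zero, mul_zero]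
  rw [hIcc, ← hrange, sum_s1_mul_stirlingSecond]

theorem X_pow_succ_dvd_sum_s1_mul_exp_sub_one_pow_sub (K : Type*) [Field K] [CharZero K]
    (n j : ℕ) :
    (X : K⟦X⟧) ^ (n + 1) ∣
      ∑ k ∈ Icc j n, C (s1 k j / k ! : K) * (exp K - 1) ^ k - C (j ! : K)⁻¹ * X ^ j := by
  refine X_pow_dvd_iff.2 fun m hm => ?_
  rw [map_sub, sub_eq_zero, map_sum, coeff_C_mul, coeff_X_pow]
  refine mul_left_cancel₀ (Nat.cast_ne_zero.2 (Nat.factorial_ne_zero m) : (m ! : K) ≠ 0) ?_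
  calc (m ! : K) * ∑ k ∈ Icc j n, coeff m (C (s1 k j / k ! : K) * (exp K - 1) ^ k)
      = ((∑ k ∈ Icc j n, s1 k j * m.stirlingSecond k : ℤ) : K) := by
        rw [mul_sum]
        push_cast
        refine sum_congr rfl fun k _ => ?_
        rw [coeff_C_mul, mul_left_comm, factorial_mul_coeff_exp_sub_one_pow]
        have : (k ! : K) ≠ 0 := Nat.cast_ne_zero.2 (Nat.factorial_ne_zero k)
        field_simp
        push_cast
        ring
    _ = (m ! : K) * ((j ! : K)⁻¹ * if m = j then 1 else 0) := by
        rw [sum_Icc_s1_mul_stirlingSecond (by omega)]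
        by_cases h : m = j
        · subst h; simp [Nat.factorial_ne_zero]
        · simp [h, Ne.symm h]

theorem coeff_rescale_exp_mul_sum_s1_mul_exp_sub_one_pow (K : Type*) [Field K] [CharZero K]
    (x : K) {i j : ℕ} (hj : 1 ≤ j) (hij : j ≤ i) :
    coeff (i - 1) (rescale x (exp K) *
        ∑ k ∈ Icc j i, C (s1 k j / k ! : K) * (exp K - 1) ^ (k - 1)) =
      Polynomial.aeval x (Polynomial.bernoulli (i - j)) / (j ! * (i - j)!) := by
  set D := exp K - 1
  set F := ∑ k ∈ Icc j i, C (s1 k j / k ! : K) * D ^ (k - 1)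
  set B : K⟦X⟧ := mk fun n => Polynomial.aeval x ((1 / n ! : ℚ) • Polynomial.bernoulli n)
  have hFD : F * D = ∑ k ∈ Icc j i, C (s1 k j / k ! : K) * D ^ k := by
    rw [sum_mul]
    refine sum_congr rfl fun k hk => ?_
    rw [mul_assoc, ← pow_succ, Nat.sub_add_cancel (hj.trans (mem_Icc.1 hk).1)]
  have hdvd : (X : K⟦X⟧) ^ (i + 1) ∣
      X * (rescale x (exp K) * F) - X * (C (j ! : K)⁻¹ * X ^ (j - 1) * B) := by
    have h : X * (rescale x (exp K) * F) - X * (C (j ! : K)⁻¹ * X ^ (j - 1) * B) =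
        B * (F * D - C (j ! : K)⁻¹ * X ^ j) := by
      have hB : B * D = X * rescale x (exp K) := Polynomial.bernoulli_generating_function x
      have hXj : (X : K⟦X⟧) * X ^ (j - 1) = X ^ j := by rw [← pow_succ', Nat.sub_add_cancel hj]
      linear_combination -F * hB - C (j ! : K)⁻¹ * B * hXj
    rw [h, hFD]
    exact dvd_mul_of_dvd_right (X_pow_succ_dvd_sum_s1_mul_exp_sub_one_pow_sub K i j) B
  have hcoeff := X_pow_dvd_iff.1 hdvd i (Nat.lt_succ_self i)
  rw [map_sub, sub_eq_zero, ← Nat.sub_add_cancel (hj.trans hij), coeff_succ_X_mul,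
    coeff_succ_X_mul] at hcoeff
  rw [hcoeff, mul_assoc, coeff_C_mul, show i - 1 = i - j + (j - 1) by omega, coeff_X_pow_mul,
    coeff_mk, map_smul, Rat.smul_def]
  push_cast
  ring

theorem bernoulli_eq_weightedStirling_sum (i j : ℕ) (hj : 1 ≤ j) (hij : j ≤ i) (x : ℂ) :
    (i.choose j : ℂ) * Polynomial.aeval x (Polynomial.bernoulli (i - j)) =
      ∑ k ∈ Finset.Icc j i, (i : ℂ) / (k : ℂ) * R2 (i - 1) (k - 1) x * (s1 k j : ℂ) := by
  have hterm : ∀ k ∈ Icc j i, (i : ℂ) / k * R2 (i - 1) (k - 1) x * s1 k j =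
      i ! * coeff (i - 1) (rescale x (exp ℂ) * (C (s1 k j / k ! : ℂ) * (exp ℂ - 1) ^ (k - 1))) := by
    intro k hk
    have hk : k ≠ 0 := by simp only [mem_Icc] at hk; omega
    rw [R2, mul_left_comm (rescale x (exp ℂ)), coeff_C_mul, ← Nat.mul_factorial_pred hk,
      ← Nat.mul_factorial_pred (show i ≠ 0 by omega)]
    have : ((k - 1)! : ℂ) ≠ 0 := Nat.cast_ne_zero.2 (Nat.factorial_ne_zero _)
    have : (k : ℂ) ≠ 0 := Nat.cast_ne_zero.2 hk
    field_simp
    push_cast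
    ring
  rw [sum_congr rfl hterm, ← mul_sum, ← map_sum, ← mul_sum,
    coeff_rescale_exp_mul_sum_s1_mul_exp_sub_one_pow ℂ x hj hij, Nat.cast_choose ℂ hij]
  field_simp
end

section
/- For every nonnegative integer i ≥ 1 and integers r ≥ 0, p ≥ 1, the hyperharmonic numbers satisfy Σ_{k=1}^{i} C(i-k+p-1, p-1) H_k^r = H_i^{p+r}. -/
/-!
`H^{r+1}` is the sequence of partial sums of `H^r`, so `H^{p+r}` arises from `H^r` by taking
partial sums `p` times. Iterating partial sums is a convolution with binomial coefficients: after
exchanging the order of summation, each new step adds up a column of Pascal's triangle, which the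
hockey-stick identity evaluates.
-/

open Finset

/-- The hyperharmonic numbers `H_m^r`: `H_m^0 = 1/m` for `m ≥ 1` (and `0` for `m = 0`),
and `H_m^r = ∑_{k=1}^m H_k^{r-1}` for `r ≥ 1`. -/
def hyperharmonic : ℕ → ℕ → ℚ
  | 0, m => 1 / m
  | r + 1, m => ∑ k ∈ Finset.Icc 1 m, hyperharmonic r k

theorem sum_Icc_sub_add_choose {k i : ℕ} (hki : k ≤ i) (p : ℕ) :
    ∑ j ∈ Icc k i, (j - k + p).choose p = (i - k + p + 1).choose (p + 1) := by
  rw [← Finset.Ico_add_one_right_eq_Icc, sum_Ico_eq_sum_range, ← Nat.sum_range_add_choose,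
    Nat.sub_add_comm hki]
  exact sum_congr rfl fun d _ => by rw [Nat.add_sub_cancel_left]

section PartialSum

variable {R : Type*} [Semiring R]

def partialSum (f : ℕ → R) (m : ℕ) : R := ∑ k ∈ Icc 1 m, f k

theorem partialSum_iterate_succ (f : ℕ → R) (p i : ℕ) :
    partialSum^[p + 1] f i = ∑ k ∈ Icc 1 i, ((i - k + p).choose p : R) * f k := by
  induction p generalizing i with
  | zero => simp [partialSum]
  | succ p ih =>
    calc partialSum^[p + 2] f i
        = ∑ j ∈ Icc 1 i, ∑ k ∈ Icc 1 j, ((j - k + p).choose p : R) * f k := by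
          rw [Function.iterate_succ_apply']
          exact sum_congr rfl fun j _ => ih j
      _ = ∑ k ∈ Icc 1 i, (∑ j ∈ Icc k i, ((j - k + p).choose p : R)) * f k := by
          simp_rw [sum_mul]
          exact sum_comm' fun j k => by simp only [mem_Icc]; omega
      _ = ∑ k ∈ Icc 1 i, ((i - k + (p + 1)).choose (p + 1) : R) * f k := by
          refine sum_congr rfl fun k hk => ?_
          rw [← Nat.cast_sum, sum_Icc_sub_add_choose (mem_Icc.mp hk).2, add_assoc]

end PartialSum

theorem hyperharmonic_add (p r : ℕ) :
    hyperharmonic (p + r) = partialSum^[p] (hyperharmonic r) := by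
  induction p with
  | zero => simp
  | succ p ih =>
    rw [Function.iterate_succ_apply', ← ih, Nat.add_right_comm]
    rfl

theorem hyperharmonic_binomial_sum_general (i r p : ℕ) (hp : 1 ≤ p) :
    ∑ k ∈ Finset.Icc 1 i, ((i - k + p - 1).choose (p - 1) : ℚ) * hyperharmonic r k
      = hyperharmonic (p + r) i := by
  obtain ⟨q, rfl⟩ := Nat.exists_eq_add_of_le' hp
  rw [hyperharmonic_add, partialSum_iterate_succ]
  simp only [← add_assoc, Nat.add_sub_cancel]

theorem hyperharmonic_binomial_sum (i r p : ℕ) (hi : 1 ≤ i) (hp : 1 ≤ p) :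
    ∑ k ∈ Finset.Icc 1 i, ((i - k + p - 1).choose (p - 1) : ℚ) * hyperharmonic r k
      = hyperharmonic (p + r) i :=
  hyperharmonic_binomial_sum_general i r p hp
end
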